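/- arXiv:2404.11823 — 4 statements merged into one kernel-verified Lean document; each statement's English description precedes it below -/
import Mathlib

section
/- Let Γ be a cyclic group of order p^r (p an odd prime, r ≥ 2), R = ℤ_p[Γ], and N_Γ the norm element. Suppose w ∈ ℚ_p[Γ]^× satisfies (N_Γ) ⊆ w·(N_Γ, p^r) ⊆ R. Then p^r w ∈ R and the augmentation aug(w) is a unit in ℤ_p. -/
open MonoidAlgebra

/-- The inclusion ℤ_p[Γ] → ℚ_p[Γ] induced by ℤ_p ⊆ ℚ_p. -/
noncomputable def zpIncl (p : ℕ) [Fact p.Prime] (Γ : Type) [CommGroup Γ] :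
    MonoidAlgebra ℤ_[p] Γ →+* MonoidAlgebra ℚ_[p] Γ :=
  MonoidAlgebra.liftNCRingHom
    (MonoidAlgebra.singleOneRingHom.comp (PadicInt.Coe.ringHom))
    (MonoidAlgebra.of ℚ_[p] Γ) (fun _ _ => Commute.all _ _)

/-- The augmentation map ℚ_p[Γ] → ℚ_p sending every group element to 1. -/
noncomputable def qpAug (p : ℕ) [Fact p.Prime] (Γ : Type) [CommGroup Γ] :
    MonoidAlgebra ℚ_[p] Γ →+* ℚ_[p] :=
  MonoidAlgebra.liftNCRingHom (RingHom.id ℚ_[p]) 1 (fun _ _ => Commute.all _ _)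

/-!
Both claims come from applying `w` to the two generators of `(N_Γ, p^r)`. First,
`p^r w = w · p^r ∈ R`. Second, every coefficient of `w N_Γ ∈ R` equals `aug(w)`, so
`aug(w) ∈ ℤ_p`. Finally, writing `N_Γ = w y` with `y ∈ (N_Γ, p^r)`, augmentation gives
`p^r = aug(w) aug(y)`, where `p^r ∣ aug(y)` in `ℤ_p` because `aug N_Γ = |Γ| = p^r`;
so `aug(y) / p^r ∈ ℤ_p` inverts `aug(w)`.
-/

namespace MonoidAlgebra

variable {k G : Type*}

theorem coeff_mul_sum_single_one [Semiring k] [Group G] [Fintype G] (f : k[G]) (a : G) :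
    (f * ∑ g : G, single g 1).coeff a = ∑ g, f.coeff g := by
  rw [Finset.mul_sum, coeff_sum, Finset.sum_apply']
  simp only [coeff_mul_single_apply, mul_one]
  exact Fintype.sum_equiv ((Equiv.inv G).trans (Equiv.mulLeft a)) _ _ fun _ => rfl

theorem lift_one_eq_sum_coeff [CommSemiring k] [Monoid G] [Fintype G] (f : k[G]) :
    lift k k G 1 f = ∑ g, f.coeff g := by
  simp [lift_apply, Finsupp.sum_fintype]

theorem lift_one_mapRingHom {l : Type*} [CommSemiring k] [CommSemiring l] [Monoid G]
    (φ : k →+* l) (x : k[G]) :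
    lift l l G 1 (mapRingHom G φ x) = φ (lift k k G 1 x) := by
  induction x using induction_linear with
  | zero => simp
  | add f g hf hg => simp [hf, hg]
  | single a b => simp

theorem lift_one_sum_single_one [CommSemiring k] [Monoid G] [Fintype G] :
    lift k k G 1 (∑ g : G, single g 1) = Fintype.card G := by
  simp

end MonoidAlgebra

theorem dvd_map_of_mem_span_pair {R S : Type*} [CommSemiring R] [CommSemiring S] (φ : R →+* S)
    {x y z : R} {d : S} (hx : d ∣ φ x) (hy : d ∣ φ y) (hz : z ∈ Ideal.span {x, y}) :
    d ∣ φ z := by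
  obtain ⟨a, b, rfl⟩ := Ideal.mem_span_pair.mp hz
  rw [map_add, map_mul, map_mul]
  exact dvd_add (dvd_mul_of_dvd_right hx _) (dvd_mul_of_dvd_right hy _)

section
variable (p : ℕ) [Fact p.Prime] (Γ : Type) [CommGroup Γ]

theorem zpIncl_eq_mapRingHom : zpIncl p Γ = mapRingHom Γ PadicInt.Coe.ringHom := by
  apply ringHom_ext <;> intros <;> simp [zpIncl]

theorem qpAug_eq_lift_one : qpAug p Γ = (lift ℚ_[p] ℚ_[p] Γ 1).toRingHom := by
  apply ringHom_ext <;> intros <;> simp [qpAug]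

theorem coeff_zpIncl (x : MonoidAlgebra ℤ_[p] Γ) (g : Γ) :
    (zpIncl p Γ x).coeff g = x.coeff g := by
  rw [zpIncl_eq_mapRingHom, coeff_mapRingHom]
  rfl

theorem qpAug_zpIncl (x : MonoidAlgebra ℤ_[p] Γ) :
    qpAug p Γ (zpIncl p Γ x) = lift ℤ_[p] ℤ_[p] Γ 1 x := by
  rw [qpAug_eq_lift_one, zpIncl_eq_mapRingHom]
  exact lift_one_mapRingHom _ x

theorem qpAug_eq_coeff_mul_zpIncl_norm [Fintype Γ] (f : MonoidAlgebra ℚ_[p] Γ) :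
    qpAug p Γ f = (f * zpIncl p Γ (∑ g : Γ, single g 1)).coeff 1 := by
  rw [map_sum]
  simp only [zpIncl_eq_mapRingHom, mapRingHom_single, map_one]
  rw [coeff_mul_sum_single_one, qpAug_eq_lift_one]
  exact lift_one_eq_sum_coeff f

end

theorem stmt1_general (p r : ℕ) [Fact p.Prime]
    (Γ : Type) [CommGroup Γ] [Fintype Γ]
    (hcard : Fintype.card Γ = p ^ r)
    (N : MonoidAlgebra ℤ_[p] Γ) (hN : N = ∑ g : Γ, MonoidAlgebra.single g 1)
    (w : (MonoidAlgebra ℚ_[p] Γ)ˣ)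
    (hsub1 : ∀ x ∈ Ideal.span ({N} : Set (MonoidAlgebra ℤ_[p] Γ)),
      ∃ y ∈ Ideal.span ({N, (p : MonoidAlgebra ℤ_[p] Γ) ^ r} : Set (MonoidAlgebra ℤ_[p] Γ)),
        zpIncl p Γ x = (w : MonoidAlgebra ℚ_[p] Γ) * zpIncl p Γ y)
    (hsub2 : ∀ y ∈ Ideal.span ({N, (p : MonoidAlgebra ℤ_[p] Γ) ^ r} : Set (MonoidAlgebra ℤ_[p] Γ)),
      ∃ x : MonoidAlgebra ℤ_[p] Γ,
        (w : MonoidAlgebra ℚ_[p] Γ) * zpIncl p Γ y = zpIncl p Γ x) :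
    (∃ x : MonoidAlgebra ℤ_[p] Γ,
        (p : MonoidAlgebra ℚ_[p] Γ) ^ r * (w : MonoidAlgebra ℚ_[p] Γ) = zpIncl p Γ x) ∧
      ∃ z : ℤ_[p], IsUnit z ∧ (z : ℚ_[p]) = qpAug p Γ (w : MonoidAlgebra ℚ_[p] Γ) := by
  have hN_mem : N ∈ Ideal.span {N, (p : MonoidAlgebra ℤ_[p] Γ) ^ r} :=
    Ideal.subset_span (Set.mem_insert _ _)
  have hpr_mem :
      (p : MonoidAlgebra ℤ_[p] Γ) ^ r ∈ Ideal.span {N, (p : MonoidAlgebra ℤ_[p] Γ) ^ r} :=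
    Ideal.subset_span (Set.mem_insert_of_mem _ rfl)
  have haugN : lift ℤ_[p] ℤ_[p] Γ 1 N = (p : ℤ_[p]) ^ r := by
    rw [hN, lift_one_sum_single_one, hcard]; push_cast; rfl
  refine ⟨?_, ?_⟩
  · obtain ⟨x, hx⟩ := hsub2 _ hpr_mem
    exact ⟨x, by rw [← hx, map_pow, map_natCast, mul_comm]⟩
  obtain ⟨x, hx⟩ := hsub2 N hN_mem
  have hz : (x.coeff 1 : ℚ_[p]) = qpAug p Γ w := by
    rw [← coeff_zpIncl, ← hx, hN, qpAug_eq_coeff_mul_zpIncl_norm]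
  obtain ⟨y, hy, hNy⟩ := hsub1 N (Ideal.mem_span_singleton_self N)
  obtain ⟨c, hc⟩ : (p : ℤ_[p]) ^ r ∣ lift ℤ_[p] ℤ_[p] Γ 1 y :=
    dvd_map_of_mem_span_pair (lift ℤ_[p] ℤ_[p] Γ 1).toRingHom (by simp [haugN]) (by simp) hy
  have hunit : x.coeff 1 * c = 1 := by
    have h := congrArg (qpAug p Γ) hNy
    rw [map_mul, qpAug_zpIncl, qpAug_zpIncl, haugN, hc, ← hz, ← PadicInt.coe_mul] at h
    replace h := Subtype.coe_injective h
    have hpr : (p : ℤ_[p]) ^ r ≠ 0 :=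
      pow_ne_zero r (Nat.cast_ne_zero.mpr (Fact.out : p.Prime).ne_zero)
    exact mul_left_cancel₀ hpr (by linear_combination -h)
  exact ⟨x.coeff 1, IsUnit.of_mul_eq_one _ hunit, hz⟩

/-- Γ cyclic of order p^r (p odd prime, r ≥ 2), R = ℤ_p[Γ], N_Γ the norm
element.  If w ∈ ℚ_p[Γ]ˣ satisfies (N_Γ) ⊆ w·(N_Γ, p^r) ⊆ R, then p^r·w ∈ R and
aug(w) is a unit of ℤ_p. -/
theorem stmt1 (p r : ℕ) [Fact p.Prime] (hp : Odd p) (hr : 2 ≤ r)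
    (Γ : Type) [CommGroup Γ] [Fintype Γ] [IsCyclic Γ]
    (hcard : Fintype.card Γ = p ^ r)
    (N : MonoidAlgebra ℤ_[p] Γ) (hN : N = ∑ g : Γ, MonoidAlgebra.single g 1)
    (w : (MonoidAlgebra ℚ_[p] Γ)ˣ)
    (hsub1 : ∀ x ∈ Ideal.span ({N} : Set (MonoidAlgebra ℤ_[p] Γ)),
      ∃ y ∈ Ideal.span ({N, (p : MonoidAlgebra ℤ_[p] Γ) ^ r} : Set (MonoidAlgebra ℤ_[p] Γ)),
        zpIncl p Γ x = (w : MonoidAlgebra ℚ_[p] Γ) * zpIncl p Γ y)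
    (hsub2 : ∀ y ∈ Ideal.span ({N, (p : MonoidAlgebra ℤ_[p] Γ) ^ r} : Set (MonoidAlgebra ℤ_[p] Γ)),
      ∃ x : MonoidAlgebra ℤ_[p] Γ,
        (w : MonoidAlgebra ℚ_[p] Γ) * zpIncl p Γ y = zpIncl p Γ x) :
    (∃ x : MonoidAlgebra ℤ_[p] Γ,
        (p : MonoidAlgebra ℚ_[p] Γ) ^ r * (w : MonoidAlgebra ℚ_[p] Γ) = zpIncl p Γ x) ∧
      ∃ z : ℤ_[p], IsUnit z ∧ (z : ℚ_[p]) = qpAug p Γ (w : MonoidAlgebra ℚ_[p] Γ) :=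
  stmt1_general p r Γ hcard N hN w hsub1 hsub2
end

section
/- Let Γ be a cyclic group of odd order, R = ℤ'[Γ], I ⊆ Γ a subgroup with generator τ, φ̃ ∈ Γ, N_I the norm element of I, and g̃ = 1 − φ̃^{−1} + #I. Let ρ : R² → (τ−1, g̃) be the surjection sending the standard basis to τ−1 and g̃. Then the first projection R² → R restricts to an isomorphism of R-modules from Ker(ρ) onto the ideal (N_I, g̃). -/
/-!
Write `t = τ - 1` and `N = N_I`. Then `N t = 0`, every `a` with `a t = 0` is a multiple of `N`,
and every `b` with `N b = 0` is a multiple of `t`: choosing representatives of `Γ / I` splits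
`a` and `b` into their restrictions to the cosets of `I`; an element invariant under `τ` is
constant on each coset, and an element killed by `N` has coefficient sum zero on each coset, so
it is a combination of the `σ - 1 ∈ (t)` with `σ ∈ I`. Moreover `g̃` is a non-zero-divisor:
`g̃ x = 0` gives `φ̃⁻¹ x = (1 + #I) x`, hence `((1 + #I)^{ord φ̃} - 1) x = 0`.

If now `a t + b g̃ = 0`, multiplying by `N` gives `N b g̃ = 0`, so `b = c t`, so `(a + c g̃) t = 0`,
so `a + c g̃ ∈ (N)` and `a ∈ (N, g̃)`. Conversely `(N, 0)` and `(g̃, -t)` lie in the kernel, and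
`b` is determined by `a` because `g̃` is regular.
-/

open MonoidAlgebra

theorem Subgroup.bijective_out_mul {Γ : Type*} [Group Γ] (H : Subgroup Γ) :
    Function.Bijective fun p : (Γ ⧸ H) × H => p.1.out * (p.2 : Γ) := by
  have mk_out_mul (q : Γ ⧸ H) (h : H) : ((q.out * h : Γ) : Γ ⧸ H) = q := by
    rw [QuotientGroup.mk_mul_of_mem _ h.2, QuotientGroup.out_eq']
  constructor
  · rintro ⟨q, h⟩ ⟨q', h'⟩ hqh
    obtain rfl : q = q' := by
      rw [← mk_out_mul q h, ← mk_out_mul q' h']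
      exact congrArg _ hqh
    simpa using hqh
  · intro x
    refine ⟨((x : Γ ⧸ H), ⟨(x : Γ ⧸ H).out⁻¹ * x, ?_⟩), mul_inv_cancel_left _ _⟩
    exact QuotientGroup.eq.mp (QuotientGroup.out_eq' _)

section KernelOfPair

variable {R : Type*} [CommRing R] {t n g : R}

theorem map_fst_ker_coprod_toSpanSingleton_eq_span_pair (hnt : n * t = 0)
    (hann_t : ∀ a, a * t = 0 → a ∈ Ideal.span {n})
    (hann_n : ∀ b, n * b = 0 → b ∈ Ideal.span {t}) (hg : IsLeftRegular g) :
    Submodule.map (LinearMap.fst R R R)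
        (LinearMap.ker
          ((LinearMap.toSpanSingleton R R t).coprod (LinearMap.toSpanSingleton R R g))) =
      Ideal.span {n, g} := by
  apply le_antisymm
  · rintro _ ⟨⟨a, b⟩, hab, rfl⟩
    rw [SetLike.mem_coe, LinearMap.mem_ker, LinearMap.coprod_apply] at hab
    simp only [LinearMap.toSpanSingleton_apply, smul_eq_mul] at hab
    rw [LinearMap.fst_apply]
    have hnb : n * b = 0 := hg.mul_left_eq_zero_iff.mp (by linear_combination n * hab - a * hnt)
    obtain ⟨c, rfl⟩ := Ideal.mem_span_singleton'.mp (hann_n b hnb)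
    obtain ⟨d, hd⟩ := Ideal.mem_span_singleton'.mp (hann_t (a + c * g) (by linear_combination hab))
    exact Ideal.mem_span_pair.mpr ⟨d, -c, by linear_combination hd⟩
  · rw [Ideal.span_le, Set.insert_subset_iff, Set.singleton_subset_iff]
    refine ⟨⟨(n, 0), ?_, rfl⟩, ⟨(g, -t), ?_, rfl⟩⟩ <;>
      rw [SetLike.mem_coe, LinearMap.mem_ker, LinearMap.coprod_apply] <;>
      simp [hnt, mul_comm]

theorem injOn_fst_ker_coprod_toSpanSingleton (hg : IsLeftRegular g) :
    Set.InjOn Prod.fst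
      (LinearMap.ker ((LinearMap.toSpanSingleton R R t).coprod (LinearMap.toSpanSingleton R R g)) :
        Set (R × R)) := by
  rintro ⟨a, b⟩ hab ⟨a', b'⟩ hab' (rfl : a = a')
  rw [SetLike.mem_coe, LinearMap.mem_ker, LinearMap.coprod_apply] at hab hab'
  simp only [LinearMap.toSpanSingleton_apply, smul_eq_mul] at hab hab'
  have hgb : g * (b - b') = 0 := by linear_combination hab - hab'
  rw [hg.mul_left_eq_zero_iff, sub_eq_zero] at hgb
  rw [hgb]

end KernelOfPair

namespace MonoidAlgebra

theorem isLeftRegular_one_sub_single_add_natCast {k Γ : Type*} [Ring k] [IsAddTorsionFree k]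
    [Monoid Γ] {φ : Γ} (hφ : IsOfFinOrder φ) {m : ℕ} (hm : 0 < m) :
    IsLeftRegular (1 - single φ (1 : k) + m) := by
  refine isLeftRegular_of_non_zero_divisor _ fun x hx => ?_
  have hux : single φ (1 : k) * x = (m + 1) • x := by
    rw [add_mul, sub_mul, one_mul] at hx
    calc single φ 1 * x = single φ 1 * x + (x - single φ 1 * x + (m : MonoidAlgebra k Γ) * x) := by
          rw [hx, add_zero]
      _ = (m + 1) • x := by rw [add_nsmul, one_nsmul, nsmul_eq_mul]; abel
  have hpow (n : ℕ) : single φ (1 : k) ^ n * x = (m + 1) ^ n • x := by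
    induction n with
    | zero => simp
    | succ n ih => rw [pow_succ', mul_assoc, ih, mul_smul_comm, hux, smul_smul, pow_succ]
  obtain ⟨d, hd⟩ := Nat.exists_eq_add_of_lt
    (one_lt_pow₀ (by omega : 1 < m + 1) hφ.orderOf_pos.ne')
  have hdx : (d + 1) • x = 0 := by
    have := hpow (orderOf φ)
    rwa [single_pow, pow_orderOf_eq_one, one_pow, ← one_def, one_mul, hd, add_assoc, add_nsmul,
      one_nsmul, left_eq_add] at this
  exact (smul_eq_zero_iff_right d.succ_ne_zero).mp hdx

variable (k : Type*) {Γ : Type*} [CommRing k]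

noncomputable def subgroupNorm [Group Γ] (H : Subgroup Γ) [Fintype H] : MonoidAlgebra k Γ :=
  ∑ h : H, single (h : Γ) 1

variable {k} [CommGroup Γ]

section

variable (H : Subgroup Γ) [Fintype H]

theorem subgroupNorm_mul_single_sub_one {h : Γ} (hh : h ∈ H) :
    subgroupNorm k H * (single h 1 - 1) = 0 := by
  rw [mul_sub_one, sub_eq_zero]
  simp only [subgroupNorm, Finset.sum_mul, single_mul_single, one_mul]
  exact Fintype.sum_equiv (Equiv.mulRight ⟨h, hh⟩) _ _ fun _ => rfl

theorem coeff_subgroupNorm_mul (b : MonoidAlgebra k Γ) (x : Γ) :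
    (subgroupNorm k H * b).coeff x = ∑ h : H, b.coeff (x * h) := by
  simp only [subgroupNorm, Finset.sum_mul, coeff_sum, Finsupp.finsetSum_apply,
    coeff_single_mul_apply, one_mul]
  exact Fintype.sum_equiv (Equiv.inv H) _ _ fun h => by simp [mul_comm]

theorem sum_sum_single_out_mul [Fintype Γ] [Fintype (Γ ⧸ H)] (x : MonoidAlgebra k Γ) :
    ∑ q : Γ ⧸ H, ∑ h : H, single (q.out * h) (x.coeff (q.out * h)) = x := by
  rw [← Fintype.sum_prod_type',
    Fintype.sum_bijective _ H.bijective_out_mul _ (fun g => single g (x.coeff g)) fun _ => rfl]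
  ext g
  simp [coeff_sum]

theorem mem_span_subgroupNorm_of_forall_mul_single [Fintype Γ] {a : MonoidAlgebra k Γ}
    (ha : ∀ h ∈ H, a * single h 1 = a) : a ∈ Ideal.span {subgroupNorm k H} := by
  classical
  have coeff_mul_mem (x : Γ) (h : H) : a.coeff (x * h) = a.coeff x := by
    conv_lhs => rw [← ha h h.2]
    simp
  rw [Ideal.mem_span_singleton']
  refine ⟨∑ q : Γ ⧸ H, single q.out (a.coeff q.out), ?_⟩
  conv_rhs => rw [← sum_sum_single_out_mul H a]
  simp only [subgroupNorm, Finset.sum_mul, Finset.mul_sum, single_mul_single, mul_one,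
    coeff_mul_mem]
  rw [Finset.sum_comm]

end

theorem single_sub_one_mem_span_single_sub_one [Finite Γ] {τ h : Γ}
    (hh : h ∈ Subgroup.zpowers τ) :
    single h (1 : k) - 1 ∈ Ideal.span {single τ (1 : k) - 1} := by
  obtain ⟨n, rfl⟩ := (isOfFinOrder_of_finite τ).mem_powers_iff_mem_zpowers.mpr hh
  simpa [Ideal.mem_span_singleton] using sub_dvd_pow_sub_pow (single τ (1 : k)) 1 n

variable [Fintype Γ] {τ : Γ}

theorem mem_span_subgroupNorm_of_mul_single_sub_one_eq_zero {a : MonoidAlgebra k Γ}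
    (ha : a * (single τ 1 - 1) = 0) : a ∈ Ideal.span {subgroupNorm k (Subgroup.zpowers τ)} := by
  refine mem_span_subgroupNorm_of_forall_mul_single _ fun h hh => ?_
  obtain ⟨c, hc⟩ :=
    Ideal.mem_span_singleton'.mp (single_sub_one_mem_span_single_sub_one (k := k) hh)
  rw [← sub_eq_zero, ← mul_sub_one, ← hc, mul_left_comm, ha, mul_zero]

theorem mem_span_single_sub_one_of_subgroupNorm_mul_eq_zero {b : MonoidAlgebra k Γ}
    (hb : subgroupNorm k (Subgroup.zpowers τ) * b = 0) : b ∈ Ideal.span {single τ (1 : k) - 1} := by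
  classical
  have coset_sum (x : Γ) : ∑ h : Subgroup.zpowers τ, b.coeff (x * h) = 0 := by
    rw [← coeff_subgroupNorm_mul, hb, coeff_zero, Finsupp.zero_apply]
  rw [← sum_sum_single_out_mul (Subgroup.zpowers τ) b]
  refine Ideal.sum_mem _ fun q _ => ?_
  have coset_term : ∑ h : Subgroup.zpowers τ, single q.out (b.coeff (q.out * h)) = 0 := by
    rw [← single_zero q.out, ← coset_sum q.out]
    exact (map_sum (singleAddHom q.out) _ _).symm
  have coset_eq : ∑ h : Subgroup.zpowers τ, single (q.out * h) (b.coeff (q.out * h)) =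
      ∑ h : Subgroup.zpowers τ, single q.out (b.coeff (q.out * h)) * (single (h : Γ) 1 - 1) := by
    simp only [mul_sub, single_mul_single, mul_one, Finset.sum_sub_distrib, coset_term, sub_zero]
  rw [coset_eq]
  exact Ideal.sum_mem _ fun h _ =>
    Ideal.mul_mem_left _ _ (single_sub_one_mem_span_single_sub_one h.2)

end MonoidAlgebra

theorem stmt4_general (Γ : Type) [CommGroup Γ] [Fintype Γ]
    (τ φt : Γ)
    (NI : MonoidAlgebra (Localization.Away (2 : ℤ)) Γ)
    (hNI : NI = ∑ σ : Subgroup.zpowers τ, MonoidAlgebra.single (σ : Γ) 1)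
    (g : MonoidAlgebra (Localization.Away (2 : ℤ)) Γ)
    (hgdef : g = 1 - MonoidAlgebra.single φt⁻¹ 1
      + (Nat.card (Subgroup.zpowers τ) : MonoidAlgebra (Localization.Away (2 : ℤ)) Γ)) :
    Submodule.map
        (LinearMap.fst (MonoidAlgebra (Localization.Away (2 : ℤ)) Γ)
          (MonoidAlgebra (Localization.Away (2 : ℤ)) Γ)
          (MonoidAlgebra (Localization.Away (2 : ℤ)) Γ))
        (LinearMap.ker
          ((LinearMap.toSpanSingleton (MonoidAlgebra (Localization.Away (2 : ℤ)) Γ)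
              (MonoidAlgebra (Localization.Away (2 : ℤ)) Γ)
              (MonoidAlgebra.single τ 1 - 1)).coprod
            (LinearMap.toSpanSingleton (MonoidAlgebra (Localization.Away (2 : ℤ)) Γ)
              (MonoidAlgebra (Localization.Away (2 : ℤ)) Γ) g))) =
      Ideal.span {NI, g} ∧
    Set.InjOn Prod.fst
      (LinearMap.ker
        ((LinearMap.toSpanSingleton (MonoidAlgebra (Localization.Away (2 : ℤ)) Γ)
            (MonoidAlgebra (Localization.Away (2 : ℤ)) Γ)
            (MonoidAlgebra.single τ 1 - 1)).coprod
          (LinearMap.toSpanSingleton (MonoidAlgebra (Localization.Away (2 : ℤ)) Γ)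
            (MonoidAlgebra (Localization.Away (2 : ℤ)) Γ) g)) :
        Set (MonoidAlgebra (Localization.Away (2 : ℤ)) Γ × MonoidAlgebra (Localization.Away (2 : ℤ)) Γ)) := by
  subst hNI hgdef
  let R := MonoidAlgebra (Localization.Away (2 : ℤ)) Γ
  have : IsDomain (Localization.Away (2 : ℤ)) := IsLocalization.Away.isDomain _ (two_ne_zero' ℤ)
  have : CharZero (Localization.Away (2 : ℤ)) := charZero_of_injective_algebraMap <|
    IsLocalization.injective _ (powers_le_nonZeroDivisors_of_noZeroDivisors (two_ne_zero' ℤ))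
  have hg : IsLeftRegular (1 - single φt⁻¹ 1 + (Nat.card (Subgroup.zpowers τ) : R)) :=
    isLeftRegular_one_sub_single_add_natCast (isOfFinOrder_of_finite _) Nat.card_pos
  constructor
  · apply map_fst_ker_coprod_toSpanSingleton_eq_span_pair (R := R)
    · exact subgroupNorm_mul_single_sub_one _ (Subgroup.mem_zpowers τ)
    · exact fun _ => mem_span_subgroupNorm_of_mul_single_sub_one_eq_zero
    · exact fun _ => mem_span_single_sub_one_of_subgroupNorm_mul_eq_zero
    · exact hg
  · apply injOn_fst_ker_coprod_toSpanSingleton (R := R)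
    exact hg

/-- R = ℤ[1/2][Γ] with Γ cyclic of odd order, I = ⟨τ⟩, φ̃ ∈ Γ,
g̃ = 1 - φ̃⁻¹ + #I.  The first projection R² → R restricts to an isomorphism from
Ker(ρ) (where ρ : R² → (τ-1, g̃), (a,b) ↦ a(τ-1) + b g̃) onto the ideal (N_I, g̃). -/
theorem stmt4 (Γ : Type) [CommGroup Γ] [Fintype Γ] [IsCyclic Γ]
    (hodd : Odd (Fintype.card Γ)) (τ φt : Γ)
    (NI : MonoidAlgebra (Localization.Away (2 : ℤ)) Γ)
    (hNI : NI = ∑ σ : Subgroup.zpowers τ, MonoidAlgebra.single (σ : Γ) 1)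
    (g : MonoidAlgebra (Localization.Away (2 : ℤ)) Γ)
    (hgdef : g = 1 - MonoidAlgebra.single φt⁻¹ 1
      + (Nat.card (Subgroup.zpowers τ) : MonoidAlgebra (Localization.Away (2 : ℤ)) Γ)) :
    Submodule.map
        (LinearMap.fst (MonoidAlgebra (Localization.Away (2 : ℤ)) Γ)
          (MonoidAlgebra (Localization.Away (2 : ℤ)) Γ)
          (MonoidAlgebra (Localization.Away (2 : ℤ)) Γ))
        (LinearMap.ker
          ((LinearMap.toSpanSingleton (MonoidAlgebra (Localization.Away (2 : ℤ)) Γ)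
              (MonoidAlgebra (Localization.Away (2 : ℤ)) Γ)
              (MonoidAlgebra.single τ 1 - 1)).coprod
            (LinearMap.toSpanSingleton (MonoidAlgebra (Localization.Away (2 : ℤ)) Γ)
              (MonoidAlgebra (Localization.Away (2 : ℤ)) Γ) g))) =
      Ideal.span {NI, g} ∧
    Set.InjOn Prod.fst
      (LinearMap.ker
        ((LinearMap.toSpanSingleton (MonoidAlgebra (Localization.Away (2 : ℤ)) Γ)
            (MonoidAlgebra (Localization.Away (2 : ℤ)) Γ)
            (MonoidAlgebra.single τ 1 - 1)).coprod
          (LinearMap.toSpanSingleton (MonoidAlgebra (Localization.Away (2 : ℤ)) Γ)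
            (MonoidAlgebra (Localization.Away (2 : ℤ)) Γ) g)) :
        Set (MonoidAlgebra (Localization.Away (2 : ℤ)) Γ × MonoidAlgebra (Localization.Away (2 : ℤ)) Γ)) :=
  stmt4_general Γ τ φt NI hNI g hgdef
end

section
/- Let p be an odd prime, G a finite abelian group containing an element j of order 2, and v data consisting of a subgroup I_v ⊆ G with j ∉ I_v and Frobenius φ_v ∈ G/I_v such that the image of j in G/I_v is a power of φ_v, say j = φ_v^m, and p divides #I_v. Then the element g_v = 1 − φ_v^{−1} + #I_v is a unit in ℤ_p[G/I_v]^−, and hence ℤ_p[G/I_v]^−/(g_v) = 0. -/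
/-- The minus part ℤ_p[Q]^- = ℤ_p[Q]/(1+j) of a group ring with respect to an element j. -/
abbrev minusRing (p : ℕ) [Fact p.Prime] (Q : Type) [CommGroup Q] (jq : Q) :=
  MonoidAlgebra ℤ_[p] Q ⧸
    (Ideal.span {(1 : MonoidAlgebra ℤ_[p] Q) + MonoidAlgebra.single jq 1})

/-- p odd prime, G finite abelian with j of order 2, I_v ⊆ G with j ∉ I_v,
φ_v ∈ G/I_v with the image of j equal to φ_v^m, and p | #I_v.  Then
g_v = 1 - φ_v⁻¹ + #I_v is a unit of ℤ_p[G/I_v]⁻, hence ℤ_p[G/I_v]⁻/(g_v) = 0. -/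
theorem stmt14 (p : ℕ) [Fact p.Prime] (hp : Odd p)
    (G : Type) [CommGroup G] [Fintype G] (j : G) (hj : orderOf j = 2)
    (Iv : Subgroup G) (hjI : j ∉ Iv) (φ : G ⧸ Iv) (m : ℕ)
    (hjφ : ((j : G ⧸ Iv)) = φ ^ m) (hpI : p ∣ Nat.card Iv) :
    IsUnit
      (Ideal.Quotient.mk
        (Ideal.span {(1 : MonoidAlgebra ℤ_[p] (G ⧸ Iv)) +
          MonoidAlgebra.single ((j : G ⧸ Iv)) 1})
        ((1 : MonoidAlgebra ℤ_[p] (G ⧸ Iv)) - MonoidAlgebra.single φ⁻¹ 1 +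
          (Nat.card Iv : MonoidAlgebra ℤ_[p] (G ⧸ Iv)))) ∧
    Subsingleton
      (minusRing p (G ⧸ Iv) (j : G ⧸ Iv) ⧸
        Ideal.span {Ideal.Quotient.mk
          (Ideal.span {(1 : MonoidAlgebra ℤ_[p] (G ⧸ Iv)) +
            MonoidAlgebra.single ((j : G ⧸ Iv)) 1})
          ((1 : MonoidAlgebra ℤ_[p] (G ⧸ Iv)) - MonoidAlgebra.single φ⁻¹ 1 +
            (Nat.card Iv : MonoidAlgebra ℤ_[p] (G ⧸ Iv)))}) := by
  let Q := G ⧸ Iv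
  let A := MonoidAlgebra ℤ_[p] Q
  set N : ℕ := Nat.card Iv with hN
  set I : Ideal A := Ideal.span {(1 : A) + MonoidAlgebra.single ((j : Q)) 1} with hI
  set π : A →+* A ⧸ I := Ideal.Quotient.mk I with hπ
  -- j has order 2 in G, hence j̄² = 1 in Q
  have hj2 : (j : Q) * (j : Q) = 1 := by
    have : j ^ 2 = 1 := by rw [← hj]; exact pow_orderOf_eq_one j
    have := congrArg (QuotientGroup.mk (s := Iv)) this
    simpa [pow_two] using this
  have hjinv : ((j : Q))⁻¹ = (j : Q) := inv_eq_of_mul_eq_one_right hj2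
  -- in the quotient, single j̄ 1 = -1
  have hjm1 : π (MonoidAlgebra.single ((j : Q)) 1) = -1 := by
    have h0 : π ((1 : A) + MonoidAlgebra.single ((j : Q)) 1) = 0 := by
      rw [hπ, Ideal.Quotient.eq_zero_iff_mem]
      exact Ideal.subset_span rfl
    rw [map_add, map_one] at h0
    linear_combination h0
  -- the scalar (1+N)^m + 1 is a unit of ℤ_p
  have hc : IsUnit (((1 + (N : ℤ_[p])) ^ m + 1 : ℤ_[p])) := by
    by_contra hc
    have hmem : ((1 + (N : ℤ_[p])) ^ m + 1) ∈ IsLocalRing.maximalIdeal ℤ_[p] := hc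
    rw [← PadicInt.ker_toZMod, RingHom.mem_ker] at hmem
    have hN0 : ((N : ℤ_[p]).toZMod : ZMod p) = 0 := by
      rw [map_natCast, ZMod.natCast_eq_zero_iff]
      exact hpI
    rw [map_add, map_pow, map_add, map_one, hN0, add_zero, one_pow] at hmem
    have h2 : ((2 : ℕ) : ZMod p) = 0 := by push_cast; linear_combination hmem
    rw [ZMod.natCast_eq_zero_iff] at h2
    have := (Nat.prime_dvd_prime_iff_eq (Fact.out : p.Prime) Nat.prime_two).mp h2
    exact (Nat.not_even_iff_odd.mpr hp) (by rw [this]; exact even_two)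
  -- the image of that scalar in A ⧸ I is a unit
  have hcu : IsUnit ((1 + (N : A ⧸ I)) ^ m + 1) := by
    have := hc.map (π.comp (algebraMap ℤ_[p] A))
    convert this using 1
    push_cast [map_add, map_pow, map_one, map_natCast]
    ring
  -- g divides the unit
  have hdvd : π ((1 : A) - MonoidAlgebra.single φ⁻¹ 1 + (N : A)) ∣
      ((1 + (N : A ⧸ I)) ^ m + 1) := by
    have hgeom : ((1 + (N : A ⧸ I)) - π (MonoidAlgebra.single φ⁻¹ 1)) ∣
        ((1 + (N : A ⧸ I)) ^ m - (π (MonoidAlgebra.single φ⁻¹ 1)) ^ m) :=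
      sub_dvd_pow_sub_pow _ _ m
    have hpow : (π (MonoidAlgebra.single φ⁻¹ 1)) ^ m = -1 := by
      rw [← map_pow, MonoidAlgebra.single_pow, one_pow, inv_pow, ← hjφ, hjinv, hjm1]
    rw [hpow, sub_neg_eq_add] at hgeom
    convert hgeom using 2
    rw [map_add, map_sub, map_one, map_natCast]
    ring
  have hu : IsUnit (π ((1 : A) - MonoidAlgebra.single φ⁻¹ 1 + (N : A))) :=
    isUnit_of_dvd_unit hdvd hcu
  exact ⟨hu, Ideal.Quotient.subsingleton_iff.mpr
    (Ideal.span_singleton_eq_top.mpr hu)⟩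
end

section
/- Let Γ be a finite abelian group, I, I′ ⊆ Γ subgroups, and φ̃, φ̃′ ∈ Γ. Write ν_I = Σ_{σ∈I}σ and e = ν_I/#I ∈ ℚ[Γ]. Suppose I = I′ as subgroups and there is a unit u of ℤ[1/#I][Γ/I] with u(1 − φ^{−1}) = 1 − φ′^{−1} in ℤ[1/#I][Γ/I] (where φ, φ′ are the images of φ̃, φ̃′ in Γ/I). Then multiplication by eu + (1−e) maps the lattice (ν_I, 1 − e·φ̃^{−1}) isomorphically onto the lattice (ν_I, 1 − e·φ̃′^{−1}) inside ℚ[Γ]. -/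
open scoped Classical
/-- The inclusion ℤ[Γ] → ℚ[Γ]. -/
noncomputable def intIncl (Γ : Type) [CommGroup Γ] :
    MonoidAlgebra ℤ Γ →+* MonoidAlgebra ℚ Γ :=
  MonoidAlgebra.liftNCRingHom
    (MonoidAlgebra.singleOneRingHom.comp (Int.castRingHom ℚ))
    (MonoidAlgebra.of ℚ Γ) (fun _ _ => Commute.all _ _)

/-- `x` lies in ℤ[1/#I][Γ] ⊆ ℚ[Γ], i.e. some power of #I clears its denominators. -/
def IsIntegralUpToI (Γ : Type) [CommGroup Γ] (I : Subgroup Γ)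
    (x : MonoidAlgebra ℚ Γ) : Prop :=
  ∃ (k : ℕ) (y : MonoidAlgebra ℤ Γ), ((Nat.card I : ℚ)) ^ k • x = intIncl Γ y

lemma isIntegral_mul (Γ : Type) [CommGroup Γ] (I : Subgroup Γ)
    {a b : MonoidAlgebra ℚ Γ} (ha : IsIntegralUpToI Γ I a)
    (hb : IsIntegralUpToI Γ I b) : IsIntegralUpToI Γ I (a * b) := by
  obtain ⟨k, y, hy⟩ := ha
  obtain ⟨m, z, hz⟩ := hb
  refine ⟨k + m, y * z, ?_⟩
  rw [map_mul, ← hy, ← hz, smul_mul_smul_comm, pow_add]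

/-- Γ finite abelian, I ⊆ Γ, φ̃, φ̃′ ∈ Γ, ν_I the norm element,
e = ν_I/#I.  If u is a unit of ℤ[1/#I][Γ/I] (realized as e·ℚ[Γ]) with
u(1 − φ^{-1}) = 1 − φ′^{-1}, then multiplication by e·u + (1−e) maps the lattice
(ν_I, 1 − e·φ̃^{-1}) bijectively onto the lattice (ν_I, 1 − e·φ̃′^{-1}) inside ℚ[Γ]. -/
theorem stmt16 (Γ : Type) [CommGroup Γ] [Fintype Γ] (I : Subgroup Γ) (φt φt' : Γ)
    (ν e u w : MonoidAlgebra ℚ Γ)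
    (hν : ν = ∑ σ : I, MonoidAlgebra.single (σ : Γ) 1)
    (he : e = ((Nat.card I : ℚ))⁻¹ • ν)
    (hIu : e * u = u) (hu : IsIntegralUpToI Γ I u)
    (hw : u * w = e ∧ e * w = w ∧ IsIntegralUpToI Γ I w)
    (hrel : u * (e - e * MonoidAlgebra.single φt⁻¹ 1) =
      e - e * MonoidAlgebra.single φt'⁻¹ 1) :
    Set.BijOn (fun x => (e * u + (1 - e)) * x)
      {x | ∃ a b : MonoidAlgebra ℚ Γ, IsIntegralUpToI Γ I a ∧ IsIntegralUpToI Γ I b ∧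
        x = a * ν + b * (1 - e * MonoidAlgebra.single φt⁻¹ 1)}
      {x | ∃ a b : MonoidAlgebra ℚ Γ, IsIntegralUpToI Γ I a ∧ IsIntegralUpToI Γ I b ∧
        x = a * ν + b * (1 - e * MonoidAlgebra.single φt'⁻¹ 1)} := by
  obtain ⟨huw, hew, hwint⟩ := hw
  have hc0 : (Nat.card I : ℚ) ≠ 0 := Nat.cast_ne_zero.mpr Nat.card_pos.ne'
  have hνν : ν * ν = (Nat.card I : ℚ) • ν := by
    rw [hν, Finset.sum_mul_sum]
    have h1 : ∀ σ : I, ∑ τ : I,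
        MonoidAlgebra.single (σ : Γ) (1 : ℚ) * MonoidAlgebra.single (τ : Γ) 1
        = ∑ τ : I, MonoidAlgebra.single (τ : Γ) 1 := by
      intro σ
      rw [Fintype.sum_equiv (Equiv.mulLeft σ)
        (fun τ => MonoidAlgebra.single (σ : Γ) (1 : ℚ) * MonoidAlgebra.single (τ : Γ) 1)
        (fun τ => MonoidAlgebra.single (τ : Γ) 1) ?_]
      intro τ
      simp [MonoidAlgebra.single_mul_single]
    simp only [h1, Finset.sum_const, Finset.card_univ, Nat.card_eq_fintype_card]
    rw [← Nat.cast_smul_eq_nsmul ℚ]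
  have heν : e * ν = ν := by
    rw [he, smul_mul_assoc, hνν, smul_smul, inv_mul_cancel₀ hc0, one_smul]
  have hee : e * e = e := by
    calc e * e = (Nat.card I : ℚ)⁻¹ • (e * ν) := by rw [he, mul_smul_comm]
    _ = e := by rw [heν, ← he]
  have hinv : (e * u + (1 - e)) * (e * w + (1 - e)) = 1 := by
    linear_combination e * e * huw + (e + 2 - u - w) * hee
  have key1 : (e * u + (1 - e)) * (1 - e * MonoidAlgebra.single φt⁻¹ 1)
      = 1 - e * MonoidAlgebra.single φt'⁻¹ 1 := by
    linear_combination hrel + (MonoidAlgebra.single φt⁻¹ 1 - u * MonoidAlgebra.single φt⁻¹ 1) * hee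
  have hrel' : w * (e - e * MonoidAlgebra.single φt'⁻¹ 1)
      = e - e * MonoidAlgebra.single φt⁻¹ 1 := by
    linear_combination (e - e * MonoidAlgebra.single φt⁻¹ 1) * huw
      + (1 - MonoidAlgebra.single φt⁻¹ 1) * hee - w * hrel
  have key2 : (e * w + (1 - e)) * (1 - e * MonoidAlgebra.single φt'⁻¹ 1)
      = 1 - e * MonoidAlgebra.single φt⁻¹ 1 := by
    linear_combination hrel'
      + (MonoidAlgebra.single φt'⁻¹ 1 - w * MonoidAlgebra.single φt'⁻¹ 1) * hee
  have keyν1 : (e * u + (1 - e)) * ν = u * ν := by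
    linear_combination (u - 1) * heν
  have keyν2 : (e * w + (1 - e)) * ν = w * ν := by
    linear_combination (w - 1) * heν
  refine ⟨?_, ?_, ?_⟩
  · rintro x ⟨a, b, ha, hb, rfl⟩
    refine ⟨a * u, b, isIntegral_mul Γ I ha hu, hb, ?_⟩
    show (e * u + (1 - e)) * _ = _
    linear_combination a * keyν1 + b * key1
  · intro x _ y _ hxy
    have hxy' : (e * u + (1 - e)) * x = (e * u + (1 - e)) * y := hxy
    have h2 := congrArg (fun z => (e * w + (1 - e)) * z) hxy'
    rwa [← mul_assoc, ← mul_assoc, mul_comm (e * w + (1 - e)) (e * u + (1 - e)),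
      hinv, one_mul, one_mul] at h2
  · rintro y ⟨a, b, ha, hb, rfl⟩
    refine ⟨(e * w + (1 - e)) * (a * ν + b * (1 - e * MonoidAlgebra.single φt'⁻¹ 1)),
      ⟨a * w, b, isIntegral_mul Γ I ha hwint, hb, ?_⟩, ?_⟩
    · linear_combination a * keyν2 + b * key2
    · show (e * u + (1 - e)) * ((e * w + (1 - e)) * _) = _
      rw [← mul_assoc, hinv, one_mul]
end
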